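/- If A is an n×n complex matrix with n ≥ 1 such that ‖A h‖ ≥ m‖h‖ for all h ∈ ℂⁿ (with m > 0), then the operator norm of the adjugate matrix satisfies ‖adj A‖ ≥ m^{n-1}. -/

import Mathlib

/-!
Let σ₀ ≥ σ₁ ≥ ⋯ be the singular values of `A`. Every σᵢ is `‖A v‖ / ‖v‖` for some eigenvector `v`
of `Aᴴ A`, so the lower bound `m ‖h‖ ≤ ‖A h‖` gives σᵢ ≥ m, hence `‖det A‖ = ∏ σᵢ ≥ m ^ (n - 1) σ₀`.
Applying `adj A` to `A v` for such a `v` belonging to σ₀ gives `det A • v`, so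
`‖det A‖ ≤ ‖adj A‖ σ₀`. Dividing by σ₀ ≥ m > 0 yields the bound.
-/

open Module
open scoped InnerProductSpace

namespace LinearMap

variable {𝕜 E F : Type*} [RCLike 𝕜]
  [NormedAddCommGroup E] [InnerProductSpace 𝕜 E] [FiniteDimensional 𝕜 E]
  [NormedAddCommGroup F] [InnerProductSpace 𝕜 F] [FiniteDimensional 𝕜 F]
  (T : E →ₗ[𝕜] F)

theorem exists_ne_zero_norm_apply_eq_singularValues_mul {i : ℕ} (hi : i < finrank 𝕜 E) :
    ∃ v ≠ 0, ‖T v‖ = T.singularValues i * ‖v‖ := by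
  obtain ⟨v, hv⟩ := (T.hasEigenvalue_adjoint_comp_self_sq_singularValues hi).exists_hasEigenvector
  refine ⟨v, hv.2, (sq_eq_sq₀ (norm_nonneg _) (by positivity [T.singularValues_nonneg i])).1 ?_⟩
  have hinner : ⟪T v, T v⟫_𝕜 = ((T.singularValues i ^ 2 * ‖v‖ ^ 2 : ℝ) : 𝕜) := by
    rw [← adjoint_inner_right, ← comp_apply, hv.apply_eq_smul, inner_smul_right,
      inner_self_eq_norm_sq_to_K]
    push_cast; ring
  rw [mul_pow, ← RCLike.ofReal_inj (K := 𝕜), ← hinner, inner_self_eq_norm_sq_to_K]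
  push_cast; rfl

theorem le_singularValues_of_forall_mul_norm_le {m : ℝ} (hT : ∀ x, m * ‖x‖ ≤ ‖T x‖) {i : ℕ}
    (hi : i < finrank 𝕜 E) : m ≤ T.singularValues i := by
  obtain ⟨v, hv0, hv⟩ := T.exists_ne_zero_norm_apply_eq_singularValues_mul hi
  exact le_of_mul_le_mul_right (hv ▸ hT v) (norm_pos_iff.2 hv0)

theorem pow_mul_singularValues_zero_le_normDet {m : ℝ} (hm : 0 ≤ m)
    (hT : ∀ x, m * ‖x‖ ≤ ‖T x‖) :
    m ^ (finrank 𝕜 E - 1) * T.singularValues 0 ≤ T.normDet := by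
  rw [normDet_eq_prod_singularValues]
  rcases Nat.eq_zero_or_eq_succ_pred (finrank 𝕜 E) with h0 | hk
  · simp [h0, T.singularValues_of_finrank_le h0.le]
  rw [hk, Finset.prod_range_succ', Nat.succ_sub_one]
  gcongr
  · exact T.singularValues_nonneg 0
  · calc m ^ (finrank 𝕜 E).pred = ∏ _ ∈ Finset.range (finrank 𝕜 E).pred, m := by simp
      _ ≤ _ := Finset.prod_le_prod (fun _ _ ↦ hm) fun i hi ↦
        T.le_singularValues_of_forall_mul_norm_le hT (by grind)

end LinearMap

namespace Matrix

variable {𝕜 ι : Type*} [RCLike 𝕜] [Fintype ι] [DecidableEq ι]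

theorem norm_det_mul_norm_le_opNorm_adjugate_mul (A : Matrix ι ι 𝕜) (v : EuclideanSpace 𝕜 ι) :
    ‖A.det‖ * ‖v‖ ≤
      ‖(toEuclideanLin A.adjugate).toContinuousLinearMap‖ * ‖toEuclideanLin A v‖ := by
  have : toEuclideanLin A.adjugate (toEuclideanLin A v) = A.det • v := by
    rw [← LinearMap.comp_apply, ← toLpLin_mul_same, adjugate_mul, map_smul, toLpLin_one]
    rfl
  calc ‖A.det‖ * ‖v‖ = ‖toEuclideanLin A.adjugate (toEuclideanLin A v)‖ := by
        rw [this, norm_smul]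
    _ ≤ _ := (toEuclideanLin A.adjugate).toContinuousLinearMap.le_opNorm _

theorem norm_det_le_opNorm_adjugate_mul_singularValues (A : Matrix ι ι 𝕜) {i : ℕ}
    (hi : i < Fintype.card ι) :
    ‖A.det‖ ≤
      ‖(toEuclideanLin A.adjugate).toContinuousLinearMap‖ * (toEuclideanLin A).singularValues i := by
  obtain ⟨v, hv0, hv⟩ :=
    (toEuclideanLin A).exists_ne_zero_norm_apply_eq_singularValues_mul (by simpa using hi)
  refine le_of_mul_le_mul_right ?_ (norm_pos_iff.2 hv0)
  simpa only [hv, mul_assoc] using A.norm_det_mul_norm_le_opNorm_adjugate_mul v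

end Matrix

/-- If `A` is an `n × n` complex matrix, `n ≥ 1`, with `‖A h‖ ≥ m * ‖h‖` for all
`h ∈ ℂⁿ` (with `m > 0`), then the operator norm of the adjugate satisfies
`‖adj A‖ ≥ m ^ (n - 1)`. -/
theorem stmt_1 (n : ℕ) (hn : 1 ≤ n) (A : Matrix (Fin n) (Fin n) ℂ) (m : ℝ) (hm : 0 < m)
    (hA : ∀ h : EuclideanSpace ℂ (Fin n), m * ‖h‖ ≤ ‖Matrix.toEuclideanLin A h‖) :
    m ^ (n - 1) ≤ ‖LinearMap.toContinuousLinearMap (Matrix.toEuclideanLin A.adjugate)‖ := by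
  set T := Matrix.toEuclideanLin A
  have hσ : m ≤ T.singularValues 0 := T.le_singularValues_of_forall_mul_norm_le hA (by simpa)
  have hdet : m ^ (n - 1) * T.singularValues 0 ≤ ‖A.det‖ := by
    simpa [T, LinearMap.normDet_eq_norm_det] using T.pow_mul_singularValues_zero_le_normDet hm.le hA
  have hadj := A.norm_det_le_opNorm_adjugate_mul_singularValues (i := 0) (by simpa)
  exact le_of_mul_le_mul_right (hdet.trans hadj) (hm.trans_le hσ)
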